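/- Let (B, L) be a Banach SNL space with Banach SNL dual (B*, L̃), A a norm-closed linear L-positive subspace of B with A⁰ L̃-negative. Then for all d ∈ B and d* ∈ B*, inf_{a ∈ A} q_{L̃}(d* − La) ≤ q_{L̃}(d* − Ld) + (1/2)‖d* − Ld‖². -/

import Mathlib

open NormedSpace

noncomputable def qL {B : Type*} [NormedAddCommGroup B] [NormedSpace ℝ B]
    (L : B →L[ℝ] StrongDual ℝ B) (b : B) : ℝ := (1 / 2) * L b b

open Filter Topology

/-! For `a ∈ A` put `g = d* - L a`; then `q_{L̃}(g) = q_{L̃}(d*) - d*(a) + q_L(a)` is a convex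
quadratic function of `a`. At an approximate minimizer the first-order condition says that `g` is
small on `A`, so by Hahn–Banach `g = u + v` with `u ∈ A⁰` and `‖v‖` small. Rescaling the minimizer
along its ray we may assume `g(a) = 0`, and then `q_{L̃}(u) ≤ 0` gives
`q_{L̃}(g) ≤ ‖d*‖ ‖v‖ + ‖v‖² / 2`. Hence the infimum is at most `0`, while the right-hand side is
nonnegative because `|q_{L̃}(p)| ≤ ‖p‖² / 2`. -/

section Quadratic

variable {E : Type*} [NormedAddCommGroup E] [NormedSpace ℝ E] {T : E →L[ℝ] StrongDual ℝ E}

theorem qL_smul (t : ℝ) (x : E) : qL T (t • x) = t ^ 2 * qL T x := by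
  simp only [qL, map_smul, smul_apply, smul_eq_mul]
  ring

theorem qL_add (hT : ∀ x y, T y x = T x y) (x y : E) :
    qL T (x + y) = qL T x + T x y + qL T y := by
  simp only [qL, map_add, add_apply, hT x y]
  ring

theorem qL_sub (hT : ∀ x y, T y x = T x y) (x y : E) :
    qL T (x - y) = qL T x - T x y + qL T y := by
  simp only [qL, map_sub, sub_apply, hT x y]
  ring

theorem abs_apply_apply_le {F : Type*} [NormedAddCommGroup F] [NormedSpace ℝ F]
    {S : E →L[ℝ] StrongDual ℝ F} (hS : ‖S‖ ≤ 1) (x : E) (y : F) : |S x y| ≤ ‖x‖ * ‖y‖ :=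
  calc |S x y| ≤ ‖S‖ * ‖x‖ * ‖y‖ := S.le_opNorm₂ x y
    _ ≤ 1 * ‖x‖ * ‖y‖ := by gcongr
    _ = ‖x‖ * ‖y‖ := by rw [one_mul]

theorem abs_qL_le (hT : ∀ x y, |T x y| ≤ ‖x‖ * ‖y‖) (x : E) : |qL T x| ≤ ‖x‖ ^ 2 / 2 := by
  have h := hT x x
  rw [qL, abs_mul, abs_of_pos (by norm_num : (0 : ℝ) < 1 / 2)]
  nlinarith

end Quadratic

section ApproximateMinimizer

variable {E : Type*} [NormedAddCommGroup E] [NormedSpace ℝ E] {T : E →L[ℝ] StrongDual ℝ E}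
  {A : Submodule ℝ E} {f : StrongDual ℝ E} {a : E} {ε : ℝ}

theorem sq_sub_le_of_forall_le_add (hT : ∀ x y, T y x = T x y) (ha : a ∈ A)
    (hmin : ∀ y ∈ A, qL T a - f a ≤ qL T y - f y + ε ^ 2 / 2) {x : E} (hx : x ∈ A) :
    (f x - T a x) ^ 2 ≤ ε ^ 2 * T x x := by
  have hquad : ∀ t : ℝ, 0 ≤ qL T x * (t * t) + (T a x - f x) * t + ε ^ 2 / 2 := by
    intro t
    have h := hmin (a + t • x) (A.add_mem ha (A.smul_mem t hx))
    rw [qL_add hT, qL_smul] at h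
    simp only [map_add, map_smul, smul_eq_mul] at h
    linarith
  have h := discrim_le_zero hquad
  simp only [discrim, qL] at h
  nlinarith

theorem exists_forall_le_add_and_apply_eq (hT : ∀ x y, T y x = T x y)
    (hpos : ∀ x ∈ A, 0 ≤ qL T x) (ha : a ∈ A)
    (hmin : ∀ y ∈ A, qL T a - f a ≤ qL T y - f y + ε ^ 2 / 2) :
    ∃ a' ∈ A, (∀ y ∈ A, qL T a' - f a' ≤ qL T y - f y + ε ^ 2 / 2) ∧ f a' = T a' a' := by
  have hQ : 0 ≤ T a a := by have := hpos a ha; rw [qL] at this; linarith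
  rcases hQ.eq_or_lt with hQ_zero | hQ_pos
  · refine ⟨a, ha, hmin, ?_⟩
    have h := sq_sub_le_of_forall_le_add hT ha hmin ha
    rw [← hQ_zero, mul_zero] at h
    nlinarith [sq_nonneg (f a - T a a)]
  · set t := f a / T a a with ht
    have hdecrease : qL T (t • a) - f (t • a) ≤ qL T a - f a := by
      have key : qL T a - f a - (qL T (t • a) - f (t • a)) = (T a a - f a) ^ 2 / (2 * T a a) := by
        rw [qL_smul, map_smul, smul_eq_mul, ht, qL]
        field_simp
        ring
      have : 0 ≤ (T a a - f a) ^ 2 / (2 * T a a) := by positivity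
      linarith
    refine ⟨t • a, A.smul_mem t ha, fun y hy => hdecrease.trans (hmin y hy), ?_⟩
    simp only [map_smul, smul_apply, smul_eq_mul, ht]
    field_simp

end ApproximateMinimizer

theorem nonpos_of_forall_pos_le_mul_add_sq {μ c : ℝ} (h : ∀ ε > 0, μ ≤ c * ε + ε ^ 2 / 2) :
    μ ≤ 0 := by
  have hlim : Tendsto (fun ε : ℝ => c * ε + ε ^ 2 / 2) (𝓝[>] 0) (𝓝 0) := by
    have hcont : Continuous fun ε : ℝ => c * ε + ε ^ 2 / 2 := by fun_prop
    simpa using (hcont.tendsto 0).mono_left nhdsWithin_le_nhds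
  exact ge_of_tendsto hlim (eventually_nhdsWithin_of_forall h)

theorem exists_eqOn_norm_le {E : Type*} [NormedAddCommGroup E] [NormedSpace ℝ E]
    (A : Submodule ℝ E) (g : StrongDual ℝ E) {ε : ℝ} (hε : 0 ≤ ε)
    (hg : ∀ x ∈ A, |g x| ≤ ε * ‖x‖) :
    ∃ v : StrongDual ℝ E, (∀ x ∈ A, v x = g x) ∧ ‖v‖ ≤ ε := by
  obtain ⟨v, hv, hnorm⟩ := exists_extension_norm_eq A (g.comp A.subtypeL)
  refine ⟨v, fun x hx => hv ⟨x, hx⟩, hnorm ▸ ?_⟩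
  exact ContinuousLinearMap.opNorm_le_bound _ hε fun x => hg x x.2

section DualPair

variable {B : Type*} [NormedAddCommGroup B] [NormedSpace ℝ B] {L : B →L[ℝ] StrongDual ℝ B}
  {Lt : StrongDual ℝ B →L[ℝ] StrongDual ℝ (StrongDual ℝ B)}

theorem apply_map_apply (hdual : ∀ b : B, Lt (L b) = inclusionInDoubleDual ℝ B b)
    (b : B) (p : StrongDual ℝ B) : Lt (L b) p = p b := by
  rw [hdual b]
  rfl

theorem qL_sub_map (hsymt : ∀ p q : StrongDual ℝ B, Lt q p = Lt p q)
    (hdual : ∀ b : B, Lt (L b) = inclusionInDoubleDual ℝ B b) (d' : StrongDual ℝ B) (b : B) :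
    qL Lt (d' - L b) = qL Lt d' - d' b + qL L b := by
  rw [qL_sub hsymt, ← hsymt, apply_map_apply hdual]
  simp only [qL, apply_map_apply hdual]

theorem qL_sub_map_le (hLt : ∀ p q : StrongDual ℝ B, |Lt p q| ≤ ‖p‖ * ‖q‖)
    (hsymt : ∀ p q : StrongDual ℝ B, Lt q p = Lt p q)
    (hdual : ∀ b : B, Lt (L b) = inclusionInDoubleDual ℝ B b) {A : Submodule ℝ B}
    (hneg : ∀ b' : StrongDual ℝ B, (∀ a ∈ A, b' a = 0) → qL Lt b' ≤ 0)
    {d' v : StrongDual ℝ B} {a : B} (ha : a ∈ A) (hstat : d' a = L a a)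
    (hv : ∀ x ∈ A, v x = d' x - L a x) :
    qL Lt (d' - L a) ≤ ‖d'‖ * ‖v‖ + ‖v‖ ^ 2 / 2 := by
  have hu : qL Lt (d' - L a - v) ≤ 0 :=
    hneg _ fun x hx => by simp [hv x hx]
  have hcross : Lt (d' - L a) v = Lt d' v := by
    rw [map_sub, sub_apply, apply_map_apply hdual, hv a ha, hstat, sub_self, sub_zero]
  rw [qL_sub hsymt, hcross] at hu
  have h1 := abs_le.mp (hLt d' v)
  have h2 := abs_le.mp (abs_qL_le hLt v)
  linarith [h1.2, h2.1]

theorem iInf_qL_sub_map_le_zero (hL : ∀ b c : B, |L b c| ≤ ‖b‖ * ‖c‖)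
    (hsym : ∀ b c : B, L c b = L b c) (hLt : ∀ p q : StrongDual ℝ B, |Lt p q| ≤ ‖p‖ * ‖q‖)
    (hsymt : ∀ p q : StrongDual ℝ B, Lt q p = Lt p q)
    (hdual : ∀ b : B, Lt (L b) = inclusionInDoubleDual ℝ B b) {A : Submodule ℝ B}
    (hpos : ∀ a ∈ A, 0 ≤ qL L a)
    (hneg : ∀ b' : StrongDual ℝ B, (∀ a ∈ A, b' a = 0) → qL Lt b' ≤ 0) (d' : StrongDual ℝ B) :
    ⨅ a : A, qL Lt (d' - L a) ≤ 0 := by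
  by_cases hbdd : BddBelow (Set.range fun a : A => qL Lt (d' - L a))
  swap
  · exact (Real.iInf_of_not_bddBelow hbdd).le
  refine nonpos_of_forall_pos_le_mul_add_sq (c := ‖d'‖) fun ε hε => ?_
  obtain ⟨a, hlt⟩ : ∃ a : A, qL Lt (d' - L a) < (⨅ a : A, qL Lt (d' - L a)) + ε ^ 2 / 2 :=
    exists_lt_of_ciInf_lt (by linarith [pow_pos hε 2])
  have hmin : ∀ y ∈ A, qL L a - d' a ≤ qL L y - d' y + ε ^ 2 / 2 := by
    intro y hy
    have h := ciInf_le hbdd ⟨y, hy⟩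
    simp only [qL_sub_map hsymt hdual] at hlt h
    linarith
  obtain ⟨a', ha', hmin', hstat⟩ := exists_forall_le_add_and_apply_eq hsym hpos a.2 hmin
  have hsmall : ∀ x ∈ A, |(d' - L a') x| ≤ ε * ‖x‖ := by
    intro x hx
    have hgrad := sq_sub_le_of_forall_le_add hsym ha' hmin' hx
    have hLxx := (abs_le.mp (hL x x)).2
    refine abs_le.mpr (abs_le_of_sq_le_sq' ?_ (by positivity))
    rw [sub_apply, mul_pow]
    nlinarith [sq_nonneg ε]
  obtain ⟨v, hv, hvε⟩ := exists_eqOn_norm_le A (d' - L a') hε.le hsmall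
  calc ⨅ a : A, qL Lt (d' - L a) ≤ qL Lt (d' - L a') := ciInf_le hbdd ⟨a', ha'⟩
    _ ≤ ‖d'‖ * ‖v‖ + ‖v‖ ^ 2 / 2 := qL_sub_map_le hLt hsymt hdual hneg ha' hstat hv
    _ ≤ ‖d'‖ * ε + ε ^ 2 / 2 := by gcongr

end DualPair

theorem stmt13_general {B : Type*} [NormedAddCommGroup B] [NormedSpace ℝ B]
    (L : B →L[ℝ] StrongDual ℝ B) (hL : ‖L‖ ≤ 1)
    (hsym : ∀ b c : B, L c b = L b c)
    (Lt : StrongDual ℝ B →L[ℝ] StrongDual ℝ (StrongDual ℝ B)) (hLt : @norm _ (@ContinuousLinearMap.hasOpNorm ℝ ℝ (StrongDual ℝ B) (StrongDual ℝ (StrongDual ℝ B)) _ _ _ _ _ _ (RingHom.id ℝ)) Lt ≤ 1)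
    (hsymt : ∀ p q : StrongDual ℝ B, Lt q p = Lt p q)
    (hdual : ∀ b : B, Lt (L b) = inclusionInDoubleDual ℝ B b)
    (A : Subspace ℝ B)
    (hpos : ∀ a ∈ A, 0 ≤ qL L a)
    (hneg : ∀ b' : StrongDual ℝ B, (∀ a ∈ A, b' a = 0) → qL Lt b' ≤ 0) :
    ∀ (d : B) (d' : StrongDual ℝ B),
      ⨅ a : A, qL Lt (d' - L a) ≤ qL Lt (d' - L d) + (1 / 2) * ‖d' - L d‖ ^ 2 := by
  intro d d'
  have hLt_le := abs_apply_apply_le hLt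
  have hinf :=
    iInf_qL_sub_map_le_zero (abs_apply_apply_le hL) hsym hLt_le hsymt hdual hpos hneg d'
  have hq := (abs_le.mp (abs_qL_le hLt_le (d' - L d))).1
  linarith

theorem stmt13 {B : Type*} [NormedAddCommGroup B] [NormedSpace ℝ B] [CompleteSpace B]
    [Nontrivial B]
    (L : B →L[ℝ] StrongDual ℝ B) (hL : ‖L‖ ≤ 1)
    (hsym : ∀ b c : B, L c b = L b c)
    (Lt : StrongDual ℝ B →L[ℝ] StrongDual ℝ (StrongDual ℝ B)) (hLt : @norm _ (@ContinuousLinearMap.hasOpNorm ℝ ℝ (StrongDual ℝ B) (StrongDual ℝ (StrongDual ℝ B)) _ _ _ _ _ _ (RingHom.id ℝ)) Lt ≤ 1)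
    (hsymt : ∀ p q : StrongDual ℝ B, Lt q p = Lt p q)
    (hdual : ∀ b : B, Lt (L b) = inclusionInDoubleDual ℝ B b)
    (A : Subspace ℝ B) (hclosed : IsClosed (A : Set B))
    (hpos : ∀ a ∈ A, 0 ≤ qL L a)
    (hneg : ∀ b' : StrongDual ℝ B, (∀ a ∈ A, b' a = 0) → qL Lt b' ≤ 0) :
    ∀ (d : B) (d' : StrongDual ℝ B),
      ⨅ a : A, qL Lt (d' - L a) ≤ qL Lt (d' - L d) + (1 / 2) * ‖d' - L d‖ ^ 2 :=
  stmt13_general L hL hsym Lt hLt hsymt hdual A hpos hneg
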